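/- arXiv:2502.20102 — 8 statements merged into one kernel-verified Lean document; each statement's English description precedes it below -/
import Mathlib

section
/- Let B be a Hermitian n×n complex matrix and T a Hermitian n×n complex matrix with tr T = 0. Then Re(tr(B·T)) ≤ (1/2)·‖T‖₁ · (λmax(B) − λmin(B)), where λmax(B) and λmin(B) denote the largest and smallest eigenvalue of B. -/
open Matrix


lemma rayleigh_bounds {n : ℕ} (B : Matrix (Fin n) (Fin n) ℂ) (hB : B.IsHermitian)
    (x : Fin n → ℂ) (hx : star x ⬝ᵥ x = 1) :
    (⨅ i, hB.eigenvalues i) ≤ (star x ⬝ᵥ B *ᵥ x).re ∧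
      (star x ⬝ᵥ B *ᵥ x).re ≤ ⨆ i, hB.eigenvalues i := by
  have hn : Nonempty (Fin n) := by
    rcases Nat.eq_zero_or_pos n with h | h
    · subst h; simp [dotProduct] at hx
    · exact ⟨⟨0, h⟩⟩
  set U : Matrix (Fin n) (Fin n) ℂ := (hB.eigenvectorUnitary : Matrix (Fin n) (Fin n) ℂ) with hU
  set y : Fin n → ℂ := star U *ᵥ x with hy
  have hUy : star y = star x ᵥ* U := by
    rw [hy, star_mulVec]
    congr 1
    simp [Matrix.star_eq_conjTranspose, conjTranspose_conjTranspose]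
  have hUU : U * star U = 1 := (Matrix.mem_unitaryGroup_iff).mp (hB.eigenvectorUnitary).2
  have key : star x ⬝ᵥ B *ᵥ x
      = ∑ i, (hB.eigenvalues i : ℂ) * (star (y i) * y i) := by
    conv_lhs => rw [show B = (hB.eigenvectorUnitary : Matrix (Fin n) (Fin n) ℂ) * diagonal (RCLike.ofReal ∘ hB.eigenvalues) * star (hB.eigenvectorUnitary : Matrix (Fin n) (Fin n) ℂ) from hB.spectral_theorem]
    rw [← hU, ← mulVec_mulVec, ← mulVec_mulVec, dotProduct_mulVec, ← hUy, ← hy]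
    simp [dotProduct, mulVec_diagonal]
    refine Finset.sum_congr rfl fun i _ => ?_
    ring
  have hyy : ∑ i, star (y i) * y i = 1 := by
    have : star y ⬝ᵥ y = 1 := by
      rw [hUy, hy, ← dotProduct_mulVec, mulVec_mulVec, hUU, one_mulVec, hx]
    simpa [dotProduct] using this
  have hterm : ∀ i, star (y i) * y i = (Complex.normSq (y i) : ℂ) := fun i => by
    rw [mul_comm, Complex.star_def, Complex.mul_conj]
  have hre : (star x ⬝ᵥ B *ᵥ x).re = ∑ i, hB.eigenvalues i * Complex.normSq (y i) := by
    rw [key]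
    simp only [hterm, ← Complex.ofReal_mul, ← Complex.ofReal_sum, Complex.ofReal_re]
  have hp1 : (∑ i, Complex.normSq (y i)) = 1 := by
    have h2 := congrArg Complex.re hyy
    simp only [hterm, ← Complex.ofReal_sum, Complex.ofReal_re, Complex.one_re] at h2
    exact h2
  have hba : BddAbove (Set.range hB.eigenvalues) := Set.Finite.bddAbove (Set.finite_range _)
  have hbb : BddBelow (Set.range hB.eigenvalues) := Set.Finite.bddBelow (Set.finite_range _)
  rw [hre]
  constructor
  · calc (⨅ i, hB.eigenvalues i) = ∑ i, (⨅ j, hB.eigenvalues j) * Complex.normSq (y i) := by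
          rw [← Finset.mul_sum, hp1, mul_one]
      _ ≤ ∑ i, hB.eigenvalues i * Complex.normSq (y i) :=
          Finset.sum_le_sum fun i _ => mul_le_mul_of_nonneg_right (ciInf_le hbb i) (Complex.normSq_nonneg _)
  · calc (∑ i, hB.eigenvalues i * Complex.normSq (y i))
        ≤ ∑ i, (⨆ j, hB.eigenvalues j) * Complex.normSq (y i) :=
          Finset.sum_le_sum fun i _ => mul_le_mul_of_nonneg_right (le_ciSup hba i) (Complex.normSq_nonneg _)
      _ = ⨆ i, hB.eigenvalues i := by rw [← Finset.mul_sum, hp1, mul_one]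

/-- For Hermitian `B` and traceless Hermitian `T`,
`Re (tr (B·T)) ≤ (1/2)·‖T‖₁ · (λmax B − λmin B)`. -/
theorem stmt2 {n : ℕ} (B T : Matrix (Fin n) (Fin n) ℂ)
    (hB : B.IsHermitian) (hT : T.IsHermitian) (htr : T.trace = 0) :
    (Matrix.trace (B * T)).re ≤
      (1/2) * (∑ i, |hT.eigenvalues i|) * ((⨆ i, hB.eigenvalues i) - ⨅ i, hB.eigenvalues i) := by
  rcases Nat.eq_zero_or_pos n with hn | hn
  · subst hn
    rw [iSup_of_empty', show (⨅ i, hB.eigenvalues i) = sInf (Set.range hB.eigenvalues) from rfl]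
    simp [Matrix.trace, Real.sSup_empty, Real.sInf_empty, Set.range_eq_empty]
  have hne : Nonempty (Fin n) := ⟨⟨0, hn⟩⟩
  set V : Matrix (Fin n) (Fin n) ℂ := (hT.eigenvectorUnitary : Matrix (Fin n) (Fin n) ℂ) with hV
  set μ : Fin n → ℝ := hT.eigenvalues with hμ
  set D : Matrix (Fin n) (Fin n) ℂ := diagonal (Complex.ofReal ∘ μ) with hD
  have hVV : star V * V = 1 := (Matrix.mem_unitaryGroup_iff').mp (hT.eigenvectorUnitary).2
  have hTspec : T = V * D * star V := hT.spectral_theorem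
  set M : Matrix (Fin n) (Fin n) ℂ := star V * B * V with hM
  -- trace identity
  have htrace : Matrix.trace (B * T) = ∑ j, M j j * (μ j : ℂ) := by
    calc Matrix.trace (B * T) = Matrix.trace ((star V * B * V) * D) := by
          rw [hTspec, show B * (V * D * star V) = (B * V * D) * star V by
            simp only [← mul_assoc], Matrix.trace_mul_comm]
          simp only [← mul_assoc]
      _ = ∑ j, M j j * (μ j : ℂ) := by
          simp [Matrix.trace, Matrix.mul_diagonal, hD, hM]
  -- sum of eigenvalues of T is zero
  have hsum0 : ∑ j, μ j = 0 := by
    have : Matrix.trace T = ∑ j, (μ j : ℂ) := by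
      calc Matrix.trace T = Matrix.trace (D * (star V * V)) := by
            rw [hTspec, ← Matrix.trace_mul_cycle, ← mul_assoc]
        _ = ∑ j, (μ j : ℂ) := by simp [hVV, Matrix.trace, hD]
    rw [htr] at this
    exact_mod_cast this.symm
  -- columns of V are unit vectors; apply Rayleigh
  set a : ℝ := ⨅ i, hB.eigenvalues i with ha
  set b : ℝ := ⨆ i, hB.eigenvalues i with hb
  have hray : ∀ j, a ≤ (M j j).re ∧ (M j j).re ≤ b := by
    intro j
    set x : Fin n → ℂ := fun i => V i j with hx
    have hcol : star x ⬝ᵥ x = 1 := by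
      have := congrFun (congrFun hVV j) j
      simpa [Matrix.mul_apply, dotProduct, Matrix.one_apply, hx] using this
    have hMx : M j j = star x ⬝ᵥ B *ᵥ x := by
      simp [hM, Matrix.mul_apply, dotProduct, mulVec, hx, Finset.mul_sum, mul_assoc]
    rw [hMx]
    exact rayleigh_bounds B hB x hcol
  -- put it together
  have hre : (Matrix.trace (B * T)).re = ∑ j, (M j j).re * μ j := by
    rw [htrace, Complex.re_sum]
    refine Finset.sum_congr rfl fun j _ => ?_
    simp [Complex.mul_re]
  set c : ℝ := (a + b) / 2 with hc
  have hshift : ∑ j, (M j j).re * μ j = ∑ j, ((M j j).re - c) * μ j := by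
    have h1 : ∑ j, ((M j j).re - c) * μ j
        = ∑ j, (M j j).re * μ j - c * ∑ j, μ j := by
      rw [Finset.mul_sum, ← Finset.sum_sub_distrib]
      refine Finset.sum_congr rfl fun j _ => by ring
    rw [h1, hsum0, mul_zero, sub_zero]
  have hfinal : ∑ j, ((M j j).re - c) * μ j ≤ ((b - a) / 2) * ∑ j, |μ j| := by
    rw [Finset.mul_sum]
    refine Finset.sum_le_sum fun j _ => ?_
    have h2 : |(M j j).re - c| ≤ (b - a) / 2 := by
      rcases hray j with ⟨h3, h4⟩
      rw [abs_le]
      constructor <;> [skip; skip] <;> rw [hc] <;> linarith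
    calc ((M j j).re - c) * μ j ≤ |((M j j).re - c) * μ j| := le_abs_self _
      _ = |(M j j).re - c| * |μ j| := abs_mul _ _
      _ ≤ ((b - a) / 2) * |μ j| :=
        mul_le_mul_of_nonneg_right h2 (abs_nonneg _)
  rw [hre, hshift]
  calc ∑ j, ((M j j).re - c) * μ j ≤ ((b - a) / 2) * ∑ j, |μ j| := hfinal
    _ = 1 / 2 * (∑ i, |hT.eigenvalues i|) * (b - a) := by rw [hμ]; ring
end

section
/- Let T be a Hermitian matrix indexed by (Fin n × Fin m) × (Fin n × Fin m) over ℂ, and define its partial trace T' over the second tensor factor by T' i j := ∑ k : Fin m, T (i,k) (j,k), an n×n matrix. Then T' is Hermitian and ‖T'‖₁ ≤ ‖T‖₁. -/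
open Matrix Kronecker Complex

private lemma star_kron {l m : Type*} [Fintype l] [Fintype m]
    (A : Matrix l l ℂ) (B : Matrix m m ℂ) :
    star (A ⊗ₖ B) = (star A) ⊗ₖ (star B) := by
  ext p q
  simp [Matrix.star_apply, Matrix.kronecker_apply, mul_comm]

/-- The partial trace over the second tensor factor of a Hermitian
matrix is Hermitian, and the trace norm does not increase. -/
theorem stmt4 {n m : ℕ} (T : Matrix (Fin n × Fin m) (Fin n × Fin m) ℂ)
    (hT : T.IsHermitian)
    (T' : Matrix (Fin n) (Fin n) ℂ)
    (hT' : T' = Matrix.of fun i j => ∑ k : Fin m, T (i, k) (j, k)) :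
    ∃ h : T'.IsHermitian, ∑ i, |h.eigenvalues i| ≤ ∑ i, |hT.eigenvalues i| := by
  have hT'h : T'.IsHermitian := by
    rw [hT']
    ext i j
    simp only [conjTranspose_apply, of_apply, star_sum]
    exact Finset.sum_congr rfl fun k _ => hT.apply (i,k) (j,k)
  refine ⟨hT'h, ?_⟩
  classical
  set lam := hT'h.eigenvalues with hlam
  set μ := hT.eigenvalues with hmu
  set U1 : Matrix (Fin n) (Fin n) ℂ := (hT'h.eigenvectorUnitary : Matrix (Fin n) (Fin n) ℂ) with hU1def
  set U2 : Matrix (Fin n × Fin m) (Fin n × Fin m) ℂ := (hT.eigenvectorUnitary : Matrix (Fin n × Fin m) (Fin n × Fin m) ℂ) with hU2def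
  have hU1a : U1 * star U1 = 1 := mem_unitaryGroup_iff.mp hT'h.eigenvectorUnitary.2
  have hU1b : star U1 * U1 = 1 := mem_unitaryGroup_iff'.mp hT'h.eigenvectorUnitary.2
  have hU2a : U2 * star U2 = 1 := mem_unitaryGroup_iff.mp hT.eigenvectorUnitary.2
  have hU2b : star U2 * U2 = 1 := mem_unitaryGroup_iff'.mp hT.eigenvectorUnitary.2
  set ε : Fin n → ℝ := fun i => if lam i < 0 then -1 else 1 with hε
  set S : Matrix (Fin n) (Fin n) ℂ := U1 * diagonal (fun i => (ε i : ℂ)) * star U1 with hS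
  set V : Matrix (Fin n × Fin m) (Fin n × Fin m) ℂ :=
    U1 ⊗ₖ (1 : Matrix (Fin m) (Fin m) ℂ) with hVdef
  set W : Matrix (Fin n × Fin m) (Fin n × Fin m) ℂ :=
    S ⊗ₖ (1 : Matrix (Fin m) (Fin m) ℂ) with hWdef
  set M : Matrix (Fin n × Fin m) (Fin n × Fin m) ℂ := star U2 * V with hMdef
  have hVa : V * star V = 1 := by
    rw [hVdef, star_kron, ← mul_kronecker_mul, hU1a, star_one, one_mul, one_kronecker_one]
  have hMa : M * star M = 1 := by
    rw [hMdef, Matrix.star_mul, star_star, mul_assoc, ← mul_assoc V, hVa, one_mul, hU2b]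
  have hWdecomp : W = V * diagonal (fun p : Fin n × Fin m => (ε p.1 : ℂ)) * star V := by
    have hd : diagonal (fun p : Fin n × Fin m => (ε p.1 : ℂ))
        = diagonal (fun i => (ε i : ℂ)) ⊗ₖ (1 : Matrix (Fin m) (Fin m) ℂ) := by
      rw [← diagonal_one, diagonal_kronecker_diagonal]
      simp
    rw [hVdef, hd, star_kron, star_one, ← mul_kronecker_mul, ← mul_kronecker_mul, hWdef, hS]
    simp
  -- A1: trace (W * T) = trace (S * T')
  have hA1 : (W * T).trace = (S * T').trace := by
    rw [hT']
    simp only [trace, diag_apply, mul_apply, of_apply]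
    rw [Fintype.sum_prod_type]
    simp only [Fintype.sum_prod_type]
    simp only [hWdef, kronecker_apply, one_apply, ite_mul, one_mul, zero_mul, mul_ite,
      mul_zero, mul_one, Finset.sum_ite_eq, Finset.mem_univ, if_true, Finset.mul_sum]
    exact Finset.sum_congr rfl fun i _ => Finset.sum_comm
  -- A2: trace (S * T') = ∑ i, |lam i|
  have hA2 : (S * T').trace = ∑ i, ((|lam i| : ℝ) : ℂ) := by
    have e1 : S * T' = U1 * ((diagonal (fun i => (ε i : ℂ)) *
        diagonal (RCLike.ofReal ∘ lam)) * star U1) := by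
      rw [hT'h.spectral_theorem, Unitary.conjStarAlgAut_apply]
      simp only [hS, mul_assoc]
      rw [← mul_assoc (star U1) U1, hU1b, one_mul]
    rw [e1, trace_mul_comm, mul_assoc, mul_assoc, hU1b, mul_one,
      diagonal_mul_diagonal, trace_diagonal]
    refine Finset.sum_congr rfl fun i _ => ?_
    show (ε i : ℂ) * ((lam i : ℝ) : ℂ) = _
    by_cases h : lam i < 0
    · simp only [hε, if_pos h, _root_.abs_of_neg h]; push_cast; ring
    · simp only [hε, if_neg h, _root_.abs_of_nonneg (le_of_not_gt h)]; push_cast; ring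
  -- B: trace (W * T) = ∑ p, N p p * μ p
  set N : Matrix (Fin n × Fin m) (Fin n × Fin m) ℂ :=
    M * diagonal (fun p : Fin n × Fin m => (ε p.1 : ℂ)) * star M with hNdef
  have e2 : star U2 * (W * (U2 * diagonal (RCLike.ofReal ∘ μ)))
      = N * diagonal (RCLike.ofReal ∘ μ) := by
    rw [hWdecomp, hNdef, hMdef, Matrix.star_mul, star_star]
    simp only [mul_assoc]
  have hB : (W * T).trace = ∑ p, N p p * ((μ p : ℝ) : ℂ) := by
    conv_lhs => rw [hT.spectral_theorem, Unitary.conjStarAlgAut_apply]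
    rw [← mul_assoc, trace_mul_comm, ← mul_assoc, mul_assoc (star U2), e2]
    simp [trace, diag_apply, mul_diagonal, Function.comp]
  have hNpp : ∀ p, N p p = ((∑ q, ε q.1 * Complex.normSq (M p q) : ℝ) : ℂ) := by
    intro p
    rw [hNdef]
    simp only [mul_apply, star_apply, diagonal_apply, mul_ite, mul_zero, ite_mul, zero_mul,
      Finset.sum_ite_eq, Finset.sum_ite_eq', Finset.mem_univ, if_true]
    push_cast
    refine Finset.sum_congr rfl fun q _ => ?_
    simp only [Complex.star_def]
    rw [mul_comm (M p q), mul_assoc, Complex.mul_conj]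
  have hrow : ∀ p, ∑ q, Complex.normSq (M p q) = 1 := by
    intro p
    have h1 := congrFun (congrFun hMa p) p
    simp only [mul_apply, star_apply, one_apply_eq] at h1
    have h2 : ((∑ q, Complex.normSq (M p q) : ℝ) : ℂ) = 1 := by
      rw [← h1]
      push_cast
      refine Finset.sum_congr rfl fun q _ => ?_
      simp only [Complex.star_def]
      rw [Complex.mul_conj]
    exact_mod_cast h2
  set r : Fin n × Fin m → ℝ := fun p => ∑ q, ε q.1 * Complex.normSq (M p q) with hr
  have hbound : ∀ p, |r p| ≤ 1 := by
    intro p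
    calc |r p| ≤ ∑ q, |ε q.1 * Complex.normSq (M p q)| := Finset.abs_sum_le_sum_abs _ _
      _ = ∑ q, Complex.normSq (M p q) := by
          refine Finset.sum_congr rfl fun q _ => ?_
          rw [abs_mul]
          have hε1 : |ε q.1| = 1 := by
            rw [hε]; dsimp only; split <;> simp
          rw [hε1, one_mul, _root_.abs_of_nonneg (Complex.normSq_nonneg _)]
      _ = 1 := hrow p
  have hfinal : ∑ i, |lam i| = ∑ p, r p * μ p := by
    have hc : ((∑ i, |lam i| : ℝ) : ℂ) = ((∑ p, r p * μ p : ℝ) : ℂ) := by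
      push_cast
      rw [← hA2, ← hA1, hB]
      exact Finset.sum_congr rfl fun p _ => by rw [hNpp p]
    exact_mod_cast hc
  calc ∑ i, |lam i| = ∑ p, r p * μ p := hfinal
    _ ≤ ∑ p, |r p * μ p| := Finset.sum_le_sum fun p _ => le_abs_self _
    _ = ∑ p, |r p| * |μ p| := by simp [abs_mul]
    _ ≤ ∑ p, 1 * |μ p| := Finset.sum_le_sum fun p _ =>
        mul_le_mul_of_nonneg_right (hbound p) (abs_nonneg _)
    _ = ∑ p, |μ p| := by simp
end

section
/- Let ρ be a real symmetric positive semidefinite matrix with trace 1, indexed by (Fin 2 × Fin 2) × (Fin 2 × Fin 2). Then there exist a finite family of nonnegative weights λ_k summing to 1 and real symmetric positive semidefinite trace-1 matrices α_k, β_k of size 2×2 such that, setting σ := ∑ k, λ_k • (α_k ⊗ₖ β_k) (Kronecker product), the Hermitian matrix ρ − σ satisfies (1/2)·‖ρ − σ‖₁ ≤ 1/2. -/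
open Matrix Kronecker

lemma psd_diag {n : Type*} [Fintype n] [DecidableEq n] {M : Matrix n n ℝ}
    (hM : M.PosSemidef) (j : n) : 0 ≤ M j j := by
  have h0 := hM.dotProduct_mulVec_nonneg (Pi.single j 1)
  simpa [dotProduct, mulVec, Pi.single_apply] using h0

lemma psd_smul {n : Type*} [Fintype n] {A : Matrix n n ℝ} (hA : A.PosSemidef)
    {c : ℝ} (hc : 0 ≤ c) : (c • A).PosSemidef := by
  constructor
  · simp [Matrix.IsHermitian, Matrix.conjTranspose_smul, hA.1.eq]
    rw [show Aᵀ = A from hA.1.eq]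
  · refine (posSemidef_iff_dotProduct_mulVec.mpr ⟨?_, fun x => ?_⟩).2
    · simp [Matrix.IsHermitian, Matrix.conjTranspose_smul, hA.1.eq]
      rw [show Aᵀ = A from hA.1.eq]
    · rw [Matrix.smul_mulVec, dotProduct_smul, smul_eq_mul]
      exact mul_nonneg hc (hA.dotProduct_mulVec_nonneg x)

lemma psd2_trace_zero {A : Matrix (Fin 2) (Fin 2) ℝ} (hA : A.PosSemidef)
    (htr : A.trace = 0) : A = 0 := by
  have d0 : 0 ≤ A 0 0 := psd_diag hA 0
  have d1 : 0 ≤ A 1 1 := psd_diag hA 1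
  have htr' : A 0 0 + A 1 1 = 0 := by
    simpa [Matrix.trace, Fin.sum_univ_two] using htr
  have h00 : A 0 0 = 0 := by linarith
  have h11 : A 1 1 = 0 := by linarith
  have q1 := hA.dotProduct_mulVec_nonneg ![1,1]
  have q2 := hA.dotProduct_mulVec_nonneg ![1,-1]
  simp [dotProduct, mulVec, Fin.sum_univ_two] at q1 q2
  have hsym : A 1 0 = A 0 1 := by
    have := congrFun (congrFun hA.1 0) 1
    simpa [Matrix.conjTranspose_apply] using this
  have h01 : A 0 1 = 0 := by nlinarith
  have h10 : A 1 0 = 0 := by nlinarith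
  ext i j
  fin_cases i <;> fin_cases j <;> simp [h00, h01, h10, h11]

lemma key_lemma {n : Type*} [Fintype n] [DecidableEq n] {M X : Matrix n n ℝ}
    (h : M.IsHermitian) (h1 : (X - M).PosSemidef) (h2 : (X + M).PosSemidef) :
    ∑ j, |h.eigenvalues j| ≤ X.trace := by
  set U : Matrix n n ℝ := (h.eigenvectorUnitary : Matrix n n ℝ) with hU
  have hUU : U * star U = 1 := mem_unitaryGroup_iff.mp h.eigenvectorUnitary.2
  have hdiag : Uᴴ * M * U = diagonal h.eigenvalues := by
    have := h.conjStarAlgAut_star_eigenvectorUnitary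
    simpa [Unitary.conjStarAlgAut_apply, Matrix.star_eq_conjTranspose, Function.comp] using this
  set N : Matrix n n ℝ := Uᴴ * X * U with hN
  have e1 : Uᴴ * (X + M) * U = N + diagonal h.eigenvalues := by
    rw [Matrix.mul_add, Matrix.add_mul, hdiag]
  have e2 : Uᴴ * (X - M) * U = N - diagonal h.eigenvalues := by
    rw [Matrix.mul_sub, Matrix.sub_mul, hdiag]
  have p1 : (N - diagonal h.eigenvalues).PosSemidef := by
    rw [← e2]; exact h1.conjTranspose_mul_mul_same U
  have p2 : (N + diagonal h.eigenvalues).PosSemidef := by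
    rw [← e1]; exact h2.conjTranspose_mul_mul_same U
  have habs : ∀ j, |h.eigenvalues j| ≤ N j j := by
    intro j
    have q1 := psd_diag p1 j
    have q2 := psd_diag p2 j
    simp only [Matrix.sub_apply, Matrix.add_apply, diagonal_apply_eq] at q1 q2
    rw [abs_le]; constructor <;> linarith
  calc ∑ j, |h.eigenvalues j| ≤ ∑ j, N j j := Finset.sum_le_sum fun j _ => habs j
    _ = N.trace := rfl
    _ = X.trace := by
        rw [hN, Matrix.trace_mul_cycle]
        rw [← Matrix.star_eq_conjTranspose, hUU, Matrix.one_mul]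

/-- Every two-rebit state (real symmetric PSD matrix with trace 1 on
`(Fin 2 × Fin 2) × (Fin 2 × Fin 2)`) has trace distance at most `1/2` to some real
separable state, i.e. some convex combination of Kronecker products of real
symmetric PSD trace-1 `2×2` matrices. -/
theorem stmt5 (ρ : Matrix (Fin 2 × Fin 2) (Fin 2 × Fin 2) ℝ)
    (hρ : ρ.PosSemidef) (hρtr : ρ.trace = 1) :
    ∃ (k : ℕ) (lam : Fin k → ℝ) (α β : Fin k → Matrix (Fin 2) (Fin 2) ℝ),
      (∀ i, 0 ≤ lam i) ∧ (∑ i, lam i) = 1 ∧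
      (∀ i, (α i).PosSemidef ∧ (α i).trace = 1) ∧
      (∀ i, (β i).PosSemidef ∧ (β i).trace = 1) ∧
      ∀ h : (ρ - ∑ i, lam i • (α i ⊗ₖ β i)).IsHermitian,
        (1/2) * ∑ j, |h.eigenvalues j| ≤ 1/2 := by
  classical
  set A : Matrix (Fin 2) (Fin 2) ℝ := ρ.submatrix (fun a => ((0 : Fin 2), a)) (fun a => (0, a))
    with hAdef
  set C : Matrix (Fin 2) (Fin 2) ℝ := ρ.submatrix (fun a => ((1 : Fin 2), a)) (fun a => (1, a))
    with hCdef
  have hA : A.PosSemidef := hρ.submatrix _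
  have hC : C.PosSemidef := hρ.submatrix _
  have hAtr : 0 ≤ A.trace := by
    have := psd_diag hA 0; have := psd_diag hA 1
    simp only [Matrix.trace, Matrix.diag, Fin.sum_univ_two]; linarith
  have hCtr : 0 ≤ C.trace := by
    have := psd_diag hC 0; have := psd_diag hC 1
    simp only [Matrix.trace, Matrix.diag, Fin.sum_univ_two]; linarith
  have hsum : A.trace + C.trace = 1 := by
    rw [← hρtr]
    simp [Matrix.trace, Matrix.diag, Fintype.sum_prod_type, Fin.sum_univ_two, hAdef, hCdef]
  set βA : Matrix (Fin 2) (Fin 2) ℝ :=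
    if A.trace = 0 then Matrix.diagonal (fun _ => (1/2 : ℝ)) else A.trace⁻¹ • A with hβA
  set βC : Matrix (Fin 2) (Fin 2) ℝ :=
    if C.trace = 0 then Matrix.diagonal (fun _ => (1/2 : ℝ)) else C.trace⁻¹ • C with hβC
  refine ⟨2, ![A.trace, C.trace],
    ![Matrix.diagonal ![1, 0], Matrix.diagonal ![0, 1]], ![βA, βC], ?_, ?_, ?_, ?_, ?_⟩
  · intro i
    fin_cases i
    · simpa using hAtr
    · simpa using hCtr
  · simpa [Fin.sum_univ_two] using hsum
  · intro i
    fin_cases i <;>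
      refine ⟨Matrix.PosSemidef.diagonal (fun j => by fin_cases j <;> norm_num), ?_⟩ <;>
      simp [Matrix.trace, Matrix.diag, Fin.sum_univ_two]
  · intro i
    have hbA : βA.PosSemidef ∧ βA.trace = 1 := by
      rw [hβA]; split_ifs with h0
      · exact ⟨Matrix.PosSemidef.diagonal (fun j => by norm_num),
          by simp [Matrix.trace, Matrix.diag, Fin.sum_univ_two]⟩
      · refine ⟨psd_smul hA (by positivity), ?_⟩
        rw [Matrix.trace_smul, smul_eq_mul, inv_mul_cancel₀ h0]
    have hbC : βC.PosSemidef ∧ βC.trace = 1 := by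
      rw [hβC]; split_ifs with h0
      · exact ⟨Matrix.PosSemidef.diagonal (fun j => by norm_num),
          by simp [Matrix.trace, Matrix.diag, Fin.sum_univ_two]⟩
      · refine ⟨psd_smul hC (by positivity), ?_⟩
        rw [Matrix.trace_smul, smul_eq_mul, inv_mul_cancel₀ h0]
    fin_cases i
    · simpa using hbA
    · simpa using hbC
  · intro h
    set D : Matrix (Fin 2 × Fin 2) (Fin 2 × Fin 2) ℝ :=
      Matrix.diagonal (fun p => if p.1 = 0 then (1 : ℝ) else -1) with hD
    have hDρD : (D * ρ * D).PosSemidef := by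
      have := hρ.mul_mul_conjTranspose_same D
      simpa [hD, Matrix.diagonal_conjTranspose] using this
    have hblockA : ∀ a b, A.trace * βA a b = A a b := by
      intro a b; rw [hβA]; split_ifs with h0
      · rw [h0, psd2_trace_zero hA h0]; simp
      · simp only [Matrix.smul_apply, smul_eq_mul]
        field_simp
    have hblockC : ∀ a b, C.trace * βC a b = C a b := by
      intro a b; rw [hβC]; split_ifs with h0
      · rw [h0, psd2_trace_zero hC h0]; simp
      · simp only [Matrix.smul_apply, smul_eq_mul]
        field_simp
    have hσ : (∑ i, (![A.trace, C.trace] : Fin 2 → ℝ) i •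
          ((![Matrix.diagonal ![1, 0], Matrix.diagonal ![0, 1]] :
              Fin 2 → Matrix (Fin 2) (Fin 2) ℝ) i ⊗ₖ (![βA, βC] : Fin 2 → _) i))
        = (1/2 : ℝ) • (ρ + D * ρ * D) := by
      ext ⟨i, a⟩ ⟨j, b⟩
      have hA' : ∀ a b : Fin 2, A a b = ρ (0, a) (0, b) := fun _ _ => rfl
      have hC' : ∀ a b : Fin 2, C a b = ρ (1, a) (1, b) := fun _ _ => rfl
      fin_cases i <;> fin_cases j <;>
        simp [Fin.sum_univ_two, Matrix.add_apply, Matrix.smul_apply,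
          Matrix.kroneckerMap_apply, Matrix.diagonal_mul, Matrix.mul_diagonal,
          Matrix.diagonal_apply, hD] <;>
        simp only [← hA', ← hC', hblockA, hblockC] <;> ring
    have hDD : D * D = 1 := by
      rw [hD, Matrix.diagonal_mul_diagonal]
      have he : (fun i : Fin 2 × Fin 2 => (if i.1 = 0 then (1:ℝ) else -1) *
          if i.1 = 0 then (1:ℝ) else -1) = fun _ => 1 := by
        funext p; by_cases hp : p.1 = 0 <;> simp [hp]
      rw [he, Matrix.diagonal_one]
    have key := key_lemma h (X := (1/2 : ℝ) • (ρ + D * ρ * D)) ?_ ?_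
    · have htr : ((1/2 : ℝ) • (ρ + D * ρ * D)).trace = 1 := by
        have hcyc : (D * ρ * D).trace = ρ.trace := by
          rw [Matrix.trace_mul_cycle, hDD, Matrix.one_mul]
        rw [Matrix.trace_smul, Matrix.trace_add, hcyc, hρtr]
        norm_num
      rw [htr] at key
      linarith
    · rw [hσ]
      have : ((1/2 : ℝ) • (ρ + D * ρ * D)) -
          (ρ - (1/2 : ℝ) • (ρ + D * ρ * D)) = D * ρ * D := by module
      rw [this]
      exact hDρD
    · rw [hσ]
      have : ((1/2 : ℝ) • (ρ + D * ρ * D)) +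
          (ρ - (1/2 : ℝ) • (ρ + D * ρ * D)) = ρ := by module
      rw [this]
      exact hρ
end

section
/- Let Φ⁻ := (e_{(0,0)} − e_{(1,1)})/√2 and Ψ⁺ := (e_{(0,1)} + e_{(1,0)})/√2 in ℂ^(Fin 2 × Fin 2), and let ρ̄ := (1/2)·(Φ⁻(Φ⁻)ᴴ + Ψ⁺(Ψ⁺)ᴴ). Then the Hermitian matrix ρ̄ − (1/4)·I₄ satisfies (1/2)·‖ρ̄ − (1/4)·I₄‖₁ = 1/2, i.e. the trace distance of ρ̄ to the maximally mixed state is 1/2. -/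
open Matrix

noncomputable def stmt8Nmat : Matrix (Fin 2 × Fin 2) (Fin 2 × Fin 2) ℂ :=
  Matrix.of fun p q =>
    if (p = ((0:Fin 2),(0:Fin 2)) ∧ q = ((1:Fin 2),(1:Fin 2))) ∨
       (p = ((1:Fin 2),(1:Fin 2)) ∧ q = ((0:Fin 2),(0:Fin 2))) then -1
    else if (p = ((0:Fin 2),(1:Fin 2)) ∧ q = ((1:Fin 2),(0:Fin 2))) ∨
       (p = ((1:Fin 2),(0:Fin 2)) ∧ q = ((0:Fin 2),(1:Fin 2))) then 1 else 0

lemma stmt8Nmat_sq : stmt8Nmat * stmt8Nmat = 1 := by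
  ext ⟨i,j⟩ ⟨k,l⟩
  fin_cases i <;> fin_cases j <;> fin_cases k <;> fin_cases l <;>
    simp [stmt8Nmat, Matrix.mul_apply, Fintype.sum_prod_type, Fin.sum_univ_two,
      Matrix.one_apply, Prod.ext_iff]

lemma stmt8Nmat_herm : stmt8Nmat.IsHermitian := by
  rw [Matrix.IsHermitian]
  ext ⟨i,j⟩ ⟨k,l⟩
  fin_cases i <;> fin_cases j <;> fin_cases k <;> fin_cases l <;>
    simp [stmt8Nmat, Matrix.conjTranspose_apply, Prod.ext_iff]

/-- The trace distance of `ρ̄ = (1/2)(Φ⁻(Φ⁻)ᴴ + Ψ⁺(Ψ⁺)ᴴ)` to the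
maximally mixed state `(1/4)·I₄` equals `1/2`. -/
theorem stmt8 (Φm Ψp : Fin 2 × Fin 2 → ℂ)
    (hΦm : Φm = (Real.sqrt 2 : ℂ)⁻¹ •
      ((Pi.single ((0 : Fin 2), (0 : Fin 2)) 1 : Fin 2 × Fin 2 → ℂ)
        - (Pi.single ((1 : Fin 2), (1 : Fin 2)) 1 : Fin 2 × Fin 2 → ℂ)))
    (hΨp : Ψp = (Real.sqrt 2 : ℂ)⁻¹ •
      ((Pi.single ((0 : Fin 2), (1 : Fin 2)) 1 : Fin 2 × Fin 2 → ℂ)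
        + (Pi.single ((1 : Fin 2), (0 : Fin 2)) 1 : Fin 2 × Fin 2 → ℂ)))
    (ρbar : Matrix (Fin 2 × Fin 2) (Fin 2 × Fin 2) ℂ)
    (hρbar : ρbar = (1/2 : ℂ) • (vecMulVec Φm (star Φm) + vecMulVec Ψp (star Ψp))) :
    ∃ h : (ρbar - (1/4 : ℂ) • (1 : Matrix (Fin 2 × Fin 2) (Fin 2 × Fin 2) ℂ)).IsHermitian,
      (1/2) * ∑ i, |h.eigenvalues i| = 1/2 := by
  have h2 : ((Real.sqrt 2 : ℂ))⁻¹ * ((Real.sqrt 2 : ℂ))⁻¹ = 1/2 := by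
    rw [← mul_inv]
    norm_cast
    rw [Real.mul_self_sqrt (by norm_num)]
    norm_num
  have hN : ρbar - (1/4 : ℂ) • (1 : Matrix (Fin 2 × Fin 2) (Fin 2 × Fin 2) ℂ)
      = (1/4 : ℂ) • stmt8Nmat := by
    subst hΦm hΨp hρbar
    ext ⟨i,j⟩ ⟨k,l⟩
    fin_cases i <;> fin_cases j <;> fin_cases k <;> fin_cases l <;>
      simp [stmt8Nmat, Matrix.vecMulVec_apply, Pi.single_apply, Matrix.one_apply,
        h2, Prod.ext_iff] <;> norm_num
  set A : Matrix (Fin 2 × Fin 2) (Fin 2 × Fin 2) ℂ := ρbar - (1/4 : ℂ) • 1 with hAdef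
  have hA : A.IsHermitian := by
    rw [hN, Matrix.IsHermitian, Matrix.conjTranspose_smul, stmt8Nmat_herm.eq]
    norm_num
  have hsq : A * A = (1/16 : ℂ) • 1 := by
    rw [hN, Matrix.smul_mul, Matrix.mul_smul, smul_smul, stmt8Nmat_sq]
    norm_num
  refine ⟨hA, ?_⟩
  have key : ∀ i, |hA.eigenvalues i| = 1/4 := by
    intro i
    have hs := hA.eigenvalues_mem_spectrum_real i
    set μ : ℝ := hA.eigenvalues i with hμ
    have hsqc : (μ : ℂ)^2 = 1/16 := by
      by_contra hne
      rw [spectrum.mem_iff] at hs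
      apply hs
      have halg : algebraMap ℝ (Matrix (Fin 2 × Fin 2) (Fin 2 × Fin 2) ℂ) μ
          = (μ : ℂ) • 1 := by
        rw [Algebra.algebraMap_eq_smul_one]
        ext p q
        simp [Matrix.smul_apply, Matrix.one_apply, Complex.real_smul]
      rw [halg]
      have hcne : ((μ : ℂ)^2 - 1/16) ≠ 0 := sub_ne_zero.mpr hne
      refine (Matrix.isUnit_iff_isUnit_det _).mpr (Matrix.isUnit_det_of_right_inverse
        (B := ((μ : ℂ)^2 - 1/16)⁻¹ • ((μ : ℂ) • 1 + A)) ?_)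
      rw [Matrix.mul_smul, sub_mul, mul_add, mul_add, Matrix.smul_mul, Matrix.smul_mul,
        Matrix.one_mul, Matrix.mul_smul, Matrix.mul_one, hsq, smul_smul, Matrix.one_mul]
      have hre : ((μ:ℂ) * (μ:ℂ)) • (1 : Matrix (Fin 2 × Fin 2) (Fin 2 × Fin 2) ℂ)
          + (μ:ℂ) • A - ((μ:ℂ) • A + (1/16 : ℂ) • 1)
          = ((μ:ℂ)^2 - 1/16) • 1 := by
        rw [sq]
        module
      rw [hre, smul_smul, inv_mul_cancel₀ hcne, one_smul]
    have hsqr : μ^2 = 1/16 := by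
      have h16 : ((μ^2 : ℝ) : ℂ) = ((1/16 : ℝ) : ℂ) := by push_cast; exact hsqc
      exact_mod_cast h16
    have h0 : (|μ| - 1/4) * (|μ| + 1/4) = 0 := by
      have := sq_abs μ
      nlinarith [sq_abs μ]
    rcases mul_eq_zero.mp h0 with h | h
    · linarith
    · nlinarith [abs_nonneg μ]
  have hsum : ∑ i : Fin 2 × Fin 2, |hA.eigenvalues i| = 1 := by
    rw [Finset.sum_congr rfl fun i _ => key i, Finset.sum_const]
    norm_num
  rw [hsum]
  norm_num
end

section
/- Let y₊ := (e₀ + i·e₁)/√2 and y₋ := (e₀ − i·e₁)/√2 in ℂ^(Fin 2), and let U be the complex matrix indexed by (Fin 2 × Fin 2) × (Fin 2 × Fin 2), with index order (0,0),(0,1),(1,0),(1,1), whose rows are (1/√2, 1/√2, 0, 0), (0, 0, 1/√2, −1/√2), (0, 0, 1/√2, 1/√2), (−1/√2, 1/√2, 0, 0). Then all entries of U are real, Uᵀ·U = I (U is real orthogonal), and U·(y₊ ⊗ e₀) = y₊ ⊗ y₊ and U·(y₋ ⊗ e₀) = y₋ ⊗ y₋, where (v ⊗ w)_{(a,b)}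 := v_a · w_b. -/
open Matrix

/-- The explicit broadcasting matrix `U` (rows indexed in the order
(0,0),(0,1),(1,0),(1,1)) has real entries, is real orthogonal (`Uᵀ·U = I`) and
copies the states `y₊, y₋` onto a fresh qubit in state `e₀`:
`U·(y₊ ⊗ e₀) = y₊ ⊗ y₊` and `U·(y₋ ⊗ e₀) = y₋ ⊗ y₋`. -/
theorem stmt13 (yp ym e₀ : Fin 2 → ℂ)
    (hyp : yp = (Real.sqrt 2 : ℂ)⁻¹ •
      ((Pi.single (0 : Fin 2) 1 : Fin 2 → ℂ) + Complex.I • (Pi.single (1 : Fin 2) 1 : Fin 2 → ℂ)))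
    (hym : ym = (Real.sqrt 2 : ℂ)⁻¹ •
      ((Pi.single (0 : Fin 2) 1 : Fin 2 → ℂ) - Complex.I • (Pi.single (1 : Fin 2) 1 : Fin 2 → ℂ)))
    (he₀ : e₀ = (Pi.single (0 : Fin 2) 1 : Fin 2 → ℂ))
    (U : Matrix (Fin 2 × Fin 2) (Fin 2 × Fin 2) ℂ)
    (hU : ∀ p q, U p q =
      !![(Real.sqrt 2 : ℂ)⁻¹,  (Real.sqrt 2 : ℂ)⁻¹,  0, 0;
         0, 0,  (Real.sqrt 2 : ℂ)⁻¹, -(Real.sqrt 2 : ℂ)⁻¹;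
         0, 0,  (Real.sqrt 2 : ℂ)⁻¹,  (Real.sqrt 2 : ℂ)⁻¹;
         -(Real.sqrt 2 : ℂ)⁻¹, (Real.sqrt 2 : ℂ)⁻¹, 0, 0]
        (finProdFinEquiv p) (finProdFinEquiv q)) :
    (∀ p q, (U p q).im = 0) ∧
    Uᵀ * U = 1 ∧
    U.mulVec (fun p => yp p.1 * e₀ p.2) = (fun p => yp p.1 * yp p.2) ∧
    U.mulVec (fun p => ym p.1 * e₀ p.2) = (fun p => ym p.1 * ym p.2) := by
  have h2 : (Real.sqrt 2 : ℂ) * (Real.sqrt 2 : ℂ) = 2 := by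
    norm_cast
    rw [Real.mul_self_sqrt (by norm_num)]
  have hne : (Real.sqrt 2 : ℂ) ≠ 0 := by
    intro h; rw [h, zero_mul] at h2; norm_num at h2
  have hc : (Real.sqrt 2 : ℂ)⁻¹ * (Real.sqrt 2 : ℂ)⁻¹ = 2⁻¹ := by
    field_simp [h2]
    rw [sq, h2]
  have hsq : (Real.sqrt 2 : ℂ) ^ 2 = 2 := by rw [sq, h2]
  have f00 : finProdFinEquiv ((0 : Fin 2), (0 : Fin 2)) = (0 : Fin 4) := by decide
  have f01 : finProdFinEquiv ((0 : Fin 2), (1 : Fin 2)) = (1 : Fin 4) := by decide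
  have f10 : finProdFinEquiv ((1 : Fin 2), (0 : Fin 2)) = (2 : Fin 4) := by decide
  have f11 : finProdFinEquiv ((1 : Fin 2), (1 : Fin 2)) = (3 : Fin 4) := by decide
  refine ⟨?_, ?_, ?_, ?_⟩
  · intro p q
    obtain ⟨a, b⟩ := p
    obtain ⟨c, d⟩ := q
    rw [hU]
    fin_cases a <;> fin_cases b <;> fin_cases c <;> fin_cases d <;>
      simp only [Fin.zero_eta, Fin.mk_one, f00, f01, f10, f11] <;>
      simp [← Complex.ofReal_inv]
  · ext p q
    obtain ⟨a, b⟩ := p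
    obtain ⟨c, d⟩ := q
    simp only [Matrix.mul_apply, Matrix.transpose_apply, Fintype.sum_prod_type, hU,
      Fin.sum_univ_two]
    fin_cases a <;> fin_cases b <;> fin_cases c <;> fin_cases d <;>
      simp only [Fin.zero_eta, Fin.mk_one, f00, f01, f10, f11] <;>
      simp [Matrix.one_apply, Prod.ext_iff] <;> ring_nf <;> simp [hsq]
  · subst hyp he₀
    funext p
    obtain ⟨a, b⟩ := p
    simp only [Matrix.mulVec, dotProduct, Fintype.sum_prod_type, hU, Fin.sum_univ_two]
    fin_cases a <;> fin_cases b <;>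
      simp only [Fin.zero_eta, Fin.mk_one, f00, f01, f10, f11] <;>
      simp <;> ring_nf <;> simp [hsq]
  · subst hym he₀
    funext p
    obtain ⟨a, b⟩ := p
    simp only [Matrix.mulVec, dotProduct, Fintype.sum_prod_type, hU, Fin.sum_univ_two]
    fin_cases a <;> fin_cases b <;>
      simp only [Fin.zero_eta, Fin.mk_one, f00, f01, f10, f11] <;>
      simp <;> ring_nf <;> simp [hsq]
end

section
/- Let y₊ := (e₀ + i·e₁)/√2 and y₋ := (e₀ − i·e₁)/√2 in ℂ^(Fin 2), and let U be the complex matrix indexed by (Fin 2 × Fin 2) × (Fin 2 × Fin 2), with index order (0,0),(0,1),(1,0),(1,1), whose rows are (1/√2, 1/√2, 0, 0), (0, 0, 1/√2, −1/√2), (0, 0, 1/√2, 1/√2), (−1/√2, 1/√2, 0, 0). Define, on ℂ^((Fin 2 × Fin 2) × Fin 2), the matrix ρ̃ := (1/2)·∑_{s ∈ {+,−}} (y_s y_sᴴ) ⊗ₖ (e₀ e₀ᴴ) ⊗ₖ (y_s y_sᴴ). Then (U ⊗ₖ I₂) · ρ̃ · (U ⊗ₖ I₂)ᴴ = (1/2)·∑_{s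 ∈ {+,−}} (y_s y_sᴴ) ⊗ₖ (y_s y_sᴴ) ⊗ₖ (y_s y_sᴴ). -/
open Matrix Kronecker

lemma aux_mul_vecMulVec {m n p : Type*} [Fintype n] (A : Matrix m n ℂ) (v : n → ℂ) (w : p → ℂ) :
    A * vecMulVec v w = vecMulVec (A *ᵥ v) w := by
  ext i j
  simp only [Matrix.mul_apply, vecMulVec_apply, Matrix.mulVec, dotProduct, Finset.sum_mul,
    mul_assoc]

lemma aux_vecMulVec_mul {m n p : Type*} [Fintype n] (v : m → ℂ) (w : n → ℂ)
    (B : Matrix n p ℂ) : vecMulVec v w * B = vecMulVec v (w ᵥ* B) := by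
  ext i j
  simp only [Matrix.mul_apply, vecMulVec_apply, Matrix.vecMul, dotProduct, Finset.mul_sum,
    mul_assoc]

lemma aux_star_vecMul {m n : Type*} [Fintype n] (v : n → ℂ) (A : Matrix m n ℂ) :
    star v ᵥ* Aᴴ = star (A *ᵥ v) := by
  ext j
  simp only [Matrix.vecMul, Matrix.mulVec, dotProduct, Matrix.conjTranspose_apply,
    Pi.star_apply, ← star_mul', ← star_sum, mul_comm]

lemma aux_kron_vecMulVec {m n m' n' : Type*} (v : m → ℂ) (w : n → ℂ) (x : m' → ℂ)
    (y : n' → ℂ) : vecMulVec v w ⊗ₖ vecMulVec x y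
      = vecMulVec (fun p : m × m' => v p.1 * x p.2) (fun p : n × n' => w p.1 * y p.2) := by
  ext ⟨a,b⟩ ⟨c,d⟩
  simp only [Matrix.kroneckerMap_apply, vecMulVec_apply]
  ring

lemma aux_conj_rank_one {m n : Type*} [Fintype n] (A : Matrix m n ℂ) (v : n → ℂ) :
    A * vecMulVec v (star v) * Aᴴ = vecMulVec (A *ᵥ v) (star (A *ᵥ v)) := by
  rw [aux_mul_vecMulVec, aux_vecMulVec_mul, aux_star_vecMul]

/-- Local broadcasting of the reference-frame state: the local
orthogonal transformation `U ⊗ₖ I₂` maps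
`ρ̃ = (1/2)∑ₛ (yₛyₛᴴ) ⊗ₖ (e₀e₀ᴴ) ⊗ₖ (yₛyₛᴴ)` to
`(1/2)∑ₛ (yₛyₛᴴ) ⊗ₖ (yₛyₛᴴ) ⊗ₖ (yₛyₛᴴ)`. -/
theorem stmt14 (yp ym e₀ : Fin 2 → ℂ)
    (hyp : yp = (Real.sqrt 2 : ℂ)⁻¹ •
      ((Pi.single (0 : Fin 2) 1 : Fin 2 → ℂ) + Complex.I • (Pi.single (1 : Fin 2) 1 : Fin 2 → ℂ)))
    (hym : ym = (Real.sqrt 2 : ℂ)⁻¹ •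
      ((Pi.single (0 : Fin 2) 1 : Fin 2 → ℂ) - Complex.I • (Pi.single (1 : Fin 2) 1 : Fin 2 → ℂ)))
    (he₀ : e₀ = (Pi.single (0 : Fin 2) 1 : Fin 2 → ℂ))
    (U : Matrix (Fin 2 × Fin 2) (Fin 2 × Fin 2) ℂ)
    (hU : ∀ p q, U p q =
      !![(Real.sqrt 2 : ℂ)⁻¹,  (Real.sqrt 2 : ℂ)⁻¹,  0, 0;
         0, 0,  (Real.sqrt 2 : ℂ)⁻¹, -(Real.sqrt 2 : ℂ)⁻¹;
         0, 0,  (Real.sqrt 2 : ℂ)⁻¹,  (Real.sqrt 2 : ℂ)⁻¹;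
         -(Real.sqrt 2 : ℂ)⁻¹, (Real.sqrt 2 : ℂ)⁻¹, 0, 0]
        (finProdFinEquiv p) (finProdFinEquiv q))
    (ρtilde : Matrix ((Fin 2 × Fin 2) × Fin 2) ((Fin 2 × Fin 2) × Fin 2) ℂ)
    (hρtilde : ρtilde = (1/2 : ℂ) •
      ((vecMulVec yp (star yp) ⊗ₖ vecMulVec e₀ (star e₀)) ⊗ₖ vecMulVec yp (star yp)
       + (vecMulVec ym (star ym) ⊗ₖ vecMulVec e₀ (star e₀)) ⊗ₖ vecMulVec ym (star ym))) :
    (U ⊗ₖ (1 : Matrix (Fin 2) (Fin 2) ℂ)) * ρtilde * (U ⊗ₖ (1 : Matrix (Fin 2) (Fin 2) ℂ))ᴴ =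
      (1/2 : ℂ) •
        ((vecMulVec yp (star yp) ⊗ₖ vecMulVec yp (star yp)) ⊗ₖ vecMulVec yp (star yp)
         + (vecMulVec ym (star ym) ⊗ₖ vecMulVec ym (star ym)) ⊗ₖ vecMulVec ym (star ym)) := by
  have hconj : (U ⊗ₖ (1 : Matrix (Fin 2) (Fin 2) ℂ))ᴴ = Uᴴ ⊗ₖ (1 : Matrix (Fin 2) (Fin 2) ℂ) := by
    ext ⟨a,b⟩ ⟨c,d⟩
    simp [Matrix.conjTranspose_apply, Matrix.kroneckerMap_apply, Matrix.one_apply, apply_ite]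
    split_ifs with h1 h2 h2 <;> simp_all [eq_comm]
  have hr0 : ((Real.sqrt 2 : ℝ) : ℂ) ≠ 0 := by
    simp [Complex.ofReal_eq_zero, Real.sqrt_eq_zero']
  have hr2 : ((Real.sqrt 2 : ℝ) : ℂ) * ((Real.sqrt 2 : ℝ) : ℂ) = 2 := by
    rw [← Complex.ofReal_mul, Real.mul_self_sqrt (by norm_num)]; norm_num
  have hinv : ((Real.sqrt 2 : ℝ) : ℂ)⁻¹ * ((Real.sqrt 2 : ℝ) : ℂ)⁻¹ = 1/2 := by
    rw [← mul_inv, hr2]; norm_num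
  have ez : finProdFinEquiv (0 : Fin 2 × Fin 2) = (0 : Fin 4) := rfl
  have e00 : finProdFinEquiv ((0:Fin 2),(0:Fin 2)) = (0 : Fin 4) := rfl
  have e01 : finProdFinEquiv ((0:Fin 2),(1:Fin 2)) = (1 : Fin 4) := rfl
  have e10 : finProdFinEquiv ((1:Fin 2),(0:Fin 2)) = (2 : Fin 4) := rfl
  have e11 : finProdFinEquiv ((1:Fin 2),(1:Fin 2)) = (3 : Fin 4) := rfl
  have key : ∀ y : Fin 2 → ℂ, (y = yp ∨ y = ym) →
      U *ᵥ (fun p : Fin 2 × Fin 2 => y p.1 * e₀ p.2) = fun p : Fin 2 × Fin 2 => y p.1 * y p.2 := by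
    intro y hy
    ext ⟨a,b⟩
    rcases hy with hy | hy <;> subst hy <;>
    · subst hyp hym he₀
      simp only [Matrix.mulVec, dotProduct, Fintype.sum_prod_type, Fin.sum_univ_two, hU,
        Pi.smul_apply, Pi.add_apply, Pi.sub_apply, Pi.single_apply, smul_eq_mul]
      fin_cases a <;> fin_cases b <;>
        · simp only [Fin.mk_zero, Fin.mk_one, ez, e00, e01, e10, e11, Fin.isValue, Matrix.cons_val_zero, Matrix.cons_val_one,
            Matrix.head_cons, Matrix.cons_val_two, Matrix.cons_val_three, Matrix.vecHead,
            Matrix.vecTail, Function.comp_apply, Fin.succ_zero_eq_one]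
          try norm_num
          try ring_nf
          try simp [Complex.I_sq, hinv]
          try ring_nf
          try rw [sq, hr2]
  have step : ∀ y : Fin 2 → ℂ, (y = yp ∨ y = ym) →
      U * (vecMulVec y (star y) ⊗ₖ vecMulVec e₀ (star e₀)) * Uᴴ
        = vecMulVec y (star y) ⊗ₖ vecMulVec y (star y) := by
    intro y hy
    rw [aux_kron_vecMulVec, aux_kron_vecMulVec]
    have hstar : (fun p : Fin 2 × Fin 2 => star y p.1 * star e₀ p.2)
        = star (fun p : Fin 2 × Fin 2 => y p.1 * e₀ p.2) := by
      ext p; simp [star_mul']; try ring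
    have hstar2 : (fun p : Fin 2 × Fin 2 => star y p.1 * star y p.2)
        = star (fun p : Fin 2 × Fin 2 => y p.1 * y p.2) := by
      ext p; simp [star_mul']; try ring
    rw [hstar, hstar2, aux_conj_rank_one, key y hy]
  subst hρtilde
  rw [hconj, Matrix.mul_smul, Matrix.smul_mul, mul_add, add_mul,
    ← Matrix.mul_kronecker_mul, ← Matrix.mul_kronecker_mul,
    ← Matrix.mul_kronecker_mul, ← Matrix.mul_kronecker_mul,
    step yp (Or.inl rfl), step ym (Or.inr rfl), one_mul, mul_one, one_mul, mul_one]
end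

section
/- Let J be the real 2×2 matrix with entries J 0 1 = 1, J 1 0 = −1 and zeros on the diagonal (viewed as a complex matrix), and let Φ⁻ := (e_{(0,0)} − e_{(1,1)})/√2 and Ψ⁺ := (e_{(0,1)} + e_{(1,0)})/√2 in ℂ^(Fin 2 × Fin 2). Then (J ⊗ₖ I₂)·Φ⁻ = −Ψ⁺, (J ⊗ₖ I₂)·Ψ⁺ = Φ⁻, (I₂ ⊗ₖ J)·Φ⁻ = −Ψ⁺, and (I₂ ⊗ₖ J)·Ψ⁺ = Φ⁻. -/
open Matrix Kronecker

/-- Applying `J` to either one of the two rebits mimics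
multiplication by the imaginary unit on the logical reference-frame states:
`(J ⊗ₖ I)Φ⁻ = −Ψ⁺`, `(J ⊗ₖ I)Ψ⁺ = Φ⁻`, `(I ⊗ₖ J)Φ⁻ = −Ψ⁺`, `(I ⊗ₖ J)Ψ⁺ = Φ⁻`. -/
theorem stmt15 (J : Matrix (Fin 2) (Fin 2) ℂ) (hJ : J = !![0, 1; -1, 0])
    (Φm Ψp : Fin 2 × Fin 2 → ℂ)
    (hΦm : Φm = (Real.sqrt 2 : ℂ)⁻¹ •
      ((Pi.single ((0 : Fin 2), (0 : Fin 2)) 1 : Fin 2 × Fin 2 → ℂ)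
        - (Pi.single ((1 : Fin 2), (1 : Fin 2)) 1 : Fin 2 × Fin 2 → ℂ)))
    (hΨp : Ψp = (Real.sqrt 2 : ℂ)⁻¹ •
      ((Pi.single ((0 : Fin 2), (1 : Fin 2)) 1 : Fin 2 × Fin 2 → ℂ)
        + (Pi.single ((1 : Fin 2), (0 : Fin 2)) 1 : Fin 2 × Fin 2 → ℂ))) :
    (J ⊗ₖ (1 : Matrix (Fin 2) (Fin 2) ℂ)).mulVec Φm = -Ψp ∧
    (J ⊗ₖ (1 : Matrix (Fin 2) (Fin 2) ℂ)).mulVec Ψp = Φm ∧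
    ((1 : Matrix (Fin 2) (Fin 2) ℂ) ⊗ₖ J).mulVec Φm = -Ψp ∧
    ((1 : Matrix (Fin 2) (Fin 2) ℂ) ⊗ₖ J).mulVec Ψp = Φm := by
  subst hJ hΦm hΨp
  refine ⟨?_, ?_, ?_, ?_⟩ <;> funext ⟨i, j⟩ <;> fin_cases i <;> fin_cases j <;>
    simp [Matrix.mulVec, dotProduct, Fintype.sum_prod_type, Fin.sum_univ_succ,
      Matrix.kroneckerMap_apply, Pi.single_apply, Matrix.one_apply, Prod.ext_iff]
end

section
/- Let T : Matrix (Fin n) (Fin n) ℝ →ₗ[ℝ] Matrix (Fin m) (Fin m) ℝ be a real-linear map which is completely positive: for every k and every positive semidefinite real matrix A indexed by (Fin n × Fin k) × (Fin n × Fin k), the real matrix indexed by (Fin m × Fin k) × (Fin m × Fin k) with entries ((a,i),(b,j)) ↦ T(A^{(i,j)}) a b, where A^{(i,j)} p q := A (p,i) (q,j), is positive semidefinite. Define the complexification T_ℂ on complex n×n matrices by T_ℂ(Z) := T(Re Z) + i·T(Im Z) (entrywise real and imaginary parts). Then T_ℂ is completely positive: for every k and every positive semidefinite complex matrix Z indexed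 by (Fin n × Fin k) × (Fin n × Fin k), the complex matrix with entries ((a,i),(b,j)) ↦ T_ℂ(Z^{(i,j)}) a b is positive semidefinite. -/
open Matrix ComplexOrder

lemma quadExpand {ι R : Type*} [Fintype ι] [CommRing R] [StarRing R]
    (A : Matrix ι ι R) (x : ι → R) :
    star x ⬝ᵥ A *ᵥ x = ∑ p, ∑ q, star (x p) * (A p q * x q) := by
  simp [dotProduct, mulVec, Finset.mul_sum]

lemma mapRePSD {ι : Type*} [Fintype ι] {C : Matrix ι ι ℂ} (hC : C.PosSemidef) :
    (C.map Complex.re).PosSemidef := by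
  rw [posSemidef_iff_dotProduct_mulVec]
  constructor
  · ext p q
    simp only [conjTranspose_apply, map_apply, star_trivial]
    rw [← hC.1.apply p q]
    simp
  · intro y
    have h := hC.dotProduct_mulVec_nonneg (fun i => (y i : ℂ))
    have key : star y ⬝ᵥ (C.map Complex.re) *ᵥ y
        = ((star (fun i => (y i : ℂ)) ⬝ᵥ C *ᵥ (fun i => (y i : ℂ))).re) := by
      rw [quadExpand, quadExpand, Complex.re_sum]
      refine Finset.sum_congr rfl fun p _ => ?_
      rw [Complex.re_sum]
      refine Finset.sum_congr rfl fun q _ => ?_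
      simp [Complex.mul_re]
    rw [key]
    exact (Complex.le_def.mp h).1

lemma sumExpand {α : Type*} [AddCommMonoid α] {n' k : ℕ} (f : Fin n' × Fin (k*2) → α) :
    ∑ p, f p = ∑ a : Fin n', ∑ i : Fin k, ∑ ε : Fin 2, f (a, finProdFinEquiv (i, ε)) := by
  rw [Fintype.sum_prod_type]
  refine Finset.sum_congr rfl fun a _ => ?_
  rw [← Equiv.sum_comp (finProdFinEquiv : Fin k × Fin 2 ≃ Fin (k*2)) (fun s => f (a, s)),
    Fintype.sum_prod_type]

noncomputable def wA : Fin 2 → ℂ := ![1, Complex.I]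

/-- The complexification `T_ℂ(Z) = T(Re Z) + i·T(Im Z)` of a
completely positive real-linear map `T` on real matrices is completely positive
on complex matrices. -/
theorem stmt18 {n m : ℕ}
    (T : Matrix (Fin n) (Fin n) ℝ →ₗ[ℝ] Matrix (Fin m) (Fin m) ℝ)
    (hT : ∀ (k : ℕ) (A : Matrix (Fin n × Fin k) (Fin n × Fin k) ℝ), A.PosSemidef →
      (Matrix.of fun (p q : Fin m × Fin k) =>
        T (Matrix.of fun a b => A (a, p.2) (b, q.2)) p.1 q.1).PosSemidef)
    (Tc : Matrix (Fin n) (Fin n) ℂ → Matrix (Fin m) (Fin m) ℂ)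
    (hTc : ∀ Z, Tc Z = (T (Z.map Complex.re)).map (Complex.ofReal)
                     + Complex.I • (T (Z.map Complex.im)).map Complex.ofReal) :
    ∀ (k : ℕ) (Z : Matrix (Fin n × Fin k) (Fin n × Fin k) ℂ), Z.PosSemidef →
      (Matrix.of fun (p q : Fin m × Fin k) =>
        Tc (Matrix.of fun a b => Z (a, p.2) (b, q.2)) p.1 q.1).PosSemidef := by
  intro k Z hZ
  -- the realification B of Z
  set B : Matrix (Fin n × Fin (k*2)) (Fin n × Fin (k*2)) ℝ :=
    Matrix.of fun p q =>
      (star (wA (finProdFinEquiv.symm p.2).2) * wA (finProdFinEquiv.symm q.2).2 *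
        Z (p.1, (finProdFinEquiv.symm p.2).1) (q.1, (finProdFinEquiv.symm q.2).1)).re
    with hBdef
  have hBpsd : B.PosSemidef := by
    have hsub : (Z.submatrix
        (fun p : Fin n × Fin (k*2) => (p.1, (finProdFinEquiv.symm p.2).1))
        (fun p : Fin n × Fin (k*2) => (p.1, (finProdFinEquiv.symm p.2).1))).PosSemidef :=
      hZ.submatrix _
    have hC := hsub.conjTranspose_mul_mul_same
      (Matrix.diagonal (fun p : Fin n × Fin (k*2) => wA (finProdFinEquiv.symm p.2).2))
    have hEq : B = ((Matrix.diagonal (fun p : Fin n × Fin (k*2) =>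
          wA (finProdFinEquiv.symm p.2).2))ᴴ *
        (Z.submatrix (fun p : Fin n × Fin (k*2) => (p.1, (finProdFinEquiv.symm p.2).1))
          (fun p : Fin n × Fin (k*2) => (p.1, (finProdFinEquiv.symm p.2).1))) *
        (Matrix.diagonal (fun p : Fin n × Fin (k*2) =>
          wA (finProdFinEquiv.symm p.2).2))).map Complex.re := by
      ext p q
      simp only [hBdef, of_apply, map_apply, diagonal_conjTranspose, Matrix.mul_diagonal,
        Matrix.diagonal_mul, submatrix_apply, Pi.star_apply]
      congr 1
      ring
    rw [hEq]
    exact mapRePSD hC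
  have hNps := hT (k*2) B hBpsd
  set N : Matrix (Fin m × Fin (k*2)) (Fin m × Fin (k*2)) ℝ :=
    Matrix.of fun p q => T (Matrix.of fun a b => B (a, p.2) (b, q.2)) p.1 q.1 with hNdef
  have hNentry : ∀ p q, N p q = T (Matrix.of fun a b => B (a, p.2) (b, q.2)) p.1 q.1 :=
    fun p q => rfl
  have hblock : ∀ (i j : Fin k) (ε δ : Fin 2) (a b : Fin m),
      N (a, finProdFinEquiv (i, ε)) (b, finProdFinEquiv (j, δ))
        = T ((Matrix.of fun a' b' => Z (a', i) (b', j)).map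
            (fun z => (star (wA ε) * wA δ * z).re)) a b := by
    intro i j ε δ a b
    show T (Matrix.of fun a' b' =>
      B (a', finProdFinEquiv (i, ε)) (b', finProdFinEquiv (j, δ))) a b = _
    have harg : (Matrix.of fun a' b' =>
          B (a', finProdFinEquiv (i, ε)) (b', finProdFinEquiv (j, δ)))
        = ((Matrix.of fun a' b' => Z (a', i) (b', j)).map
            (fun z => (star (wA ε) * wA δ * z).re)) := by
      ext a' b'
      simp only [hBdef, of_apply, map_apply, Equiv.symm_apply_apply]
    rw [harg]
  have hN00 : ∀ (i j : Fin k) (a b : Fin m),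
      N (a, finProdFinEquiv (i, 0)) (b, finProdFinEquiv (j, 0))
        = T ((Matrix.of fun a' b' => Z (a', i) (b', j)).map Complex.re) a b := by
    intro i j a b
    rw [hblock]
    have harg : ((Matrix.of fun a' b' => Z (a', i) (b', j)).map
          (fun z => (star (wA 0) * wA 0 * z).re))
        = ((Matrix.of fun a' b' => Z (a', i) (b', j)).map Complex.re) := by
      ext a' b'
      simp [wA]
    rw [harg]
  have hN11 : ∀ (i j : Fin k) (a b : Fin m),
      N (a, finProdFinEquiv (i, 1)) (b, finProdFinEquiv (j, 1))
        = T ((Matrix.of fun a' b' => Z (a', i) (b', j)).map Complex.re) a b := by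
    intro i j a b
    rw [hblock]
    have harg : ((Matrix.of fun a' b' => Z (a', i) (b', j)).map
          (fun z => (star (wA 1) * wA 1 * z).re))
        = ((Matrix.of fun a' b' => Z (a', i) (b', j)).map Complex.re) := by
      ext a' b'
      simp [wA, Complex.conj_I]
    rw [harg]
  have hN10 : ∀ (i j : Fin k) (a b : Fin m),
      N (a, finProdFinEquiv (i, 1)) (b, finProdFinEquiv (j, 0))
        = T ((Matrix.of fun a' b' => Z (a', i) (b', j)).map Complex.im) a b := by
    intro i j a b
    rw [hblock]
    have harg : ((Matrix.of fun a' b' => Z (a', i) (b', j)).map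
          (fun z => (star (wA 1) * wA 0 * z).re))
        = ((Matrix.of fun a' b' => Z (a', i) (b', j)).map Complex.im) := by
      ext a' b'
      simp [wA, Complex.conj_I]
    rw [harg]
  have hN01 : ∀ (i j : Fin k) (a b : Fin m),
      N (a, finProdFinEquiv (i, 0)) (b, finProdFinEquiv (j, 1))
        = -(T ((Matrix.of fun a' b' => Z (a', i) (b', j)).map Complex.im) a b) := by
    intro i j a b
    rw [hblock]
    have harg : ((Matrix.of fun a' b' => Z (a', i) (b', j)).map
          (fun z => (star (wA 0) * wA 1 * z).re))
        = -((Matrix.of fun a' b' => Z (a', i) (b', j)).map Complex.im) := by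
      ext a' b'
      simp [wA]
    rw [harg, map_neg, Matrix.neg_apply]
  -- symmetry facts
  have hNsym : ∀ p q, N q p = N p q := fun p q => by
    have := hNps.1.apply p q; simpa using this
  have hPsym : ∀ (i j : Fin k) (a b : Fin m),
      T ((Matrix.of fun a' b' => Z (a', j) (b', i)).map Complex.re) b a
        = T ((Matrix.of fun a' b' => Z (a', i) (b', j)).map Complex.re) a b := by
    intro i j a b
    have h := hNsym (a, finProdFinEquiv (i, 0)) (b, finProdFinEquiv (j, 0))
    rwa [hN00, hN00] at h
  have hQswap : ∀ (i j : Fin k) (a b : Fin m),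
      T ((Matrix.of fun a' b' => Z (a', j) (b', i)).map Complex.im) b a
        = -(T ((Matrix.of fun a' b' => Z (a', i) (b', j)).map Complex.im) a b) := by
    intro i j a b
    have h := hNsym (a, finProdFinEquiv (i, 1)) (b, finProdFinEquiv (j, 0))
    rw [hN01, hN10] at h
    linarith
  -- the complexified matrix M
  set M : Matrix (Fin m × Fin k) (Fin m × Fin k) ℂ :=
    Matrix.of fun p q => Tc (Matrix.of fun a b => Z (a, p.2) (b, q.2)) p.1 q.1 with hMdef
  have hMentry : ∀ (a : Fin m) (i : Fin k) (b : Fin m) (j : Fin k),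
      M (a, i) (b, j)
        = (T ((Matrix.of fun a' b' => Z (a', i) (b', j)).map Complex.re) a b : ℂ)
          + Complex.I * (T ((Matrix.of fun a' b' => Z (a', i) (b', j)).map Complex.im) a b : ℂ) := by
    intro a i b j
    simp only [hMdef, of_apply, hTc, Matrix.add_apply, Matrix.smul_apply, Matrix.map_apply,
      smul_eq_mul]
  have hherm : M.IsHermitian := by
    apply Matrix.IsHermitian.ext
    rintro ⟨a, i⟩ ⟨b, j⟩
    rw [hMentry b j a i, hMentry a i b j, hPsym i j a b, hQswap i j a b]
    simp [Complex.ext_iff]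
  refine .of_dotProduct_mulVec_nonneg hherm ?_
  intro x
  set y : Fin m × Fin (k*2) → ℝ := fun p =>
    if (finProdFinEquiv.symm p.2).2 = 0 then (x (p.1, (finProdFinEquiv.symm p.2).1)).re
    else (x (p.1, (finProdFinEquiv.symm p.2).1)).im with hydef
  have hyr := hNps.dotProduct_mulVec_nonneg y
  have hy0 : ∀ (a : Fin m) (i : Fin k), y (a, finProdFinEquiv (i, 0)) = (x (a, i)).re := by
    intro a i
    simp only [hydef, Equiv.symm_apply_apply]
    simp
  have hy1 : ∀ (a : Fin m) (i : Fin k), y (a, finProdFinEquiv (i, 1)) = (x (a, i)).im := by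
    intro a i
    simp only [hydef, Equiv.symm_apply_apply]
    simp
  -- the quadratic form is real
  have hconj : (starRingEnd ℂ) (star x ⬝ᵥ M *ᵥ x) = star x ⬝ᵥ M *ᵥ x := by
    have h1 : star (star x ⬝ᵥ M *ᵥ x) = star (M *ᵥ x) ⬝ᵥ x := (star_dotProduct _ _).symm
    rw [starRingEnd_apply, h1, star_mulVec, hherm.eq, ← Matrix.dotProduct_mulVec]
  have hre : star x ⬝ᵥ M *ᵥ x = (((star x ⬝ᵥ M *ᵥ x).re : ℝ) : ℂ) :=
    (Complex.conj_eq_iff_re.mp hconj).symm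
  have hL : (star x ⬝ᵥ M *ᵥ x).re
      = ∑ a : Fin m, ∑ i : Fin k, ∑ b : Fin m, ∑ j : Fin k,
          (star (x (a, i)) * (M (a, i) (b, j) * x (b, j))).re := by
    rw [quadExpand, Complex.re_sum, Fintype.sum_prod_type]
    refine Finset.sum_congr rfl fun a _ => ?_
    refine Finset.sum_congr rfl fun i _ => ?_
    rw [Complex.re_sum, Fintype.sum_prod_type]
  have hR : star y ⬝ᵥ N *ᵥ y
      = ∑ a : Fin m, ∑ i : Fin k, ∑ b : Fin m, ∑ j : Fin k, ∑ δ : Fin 2, ∑ ε : Fin 2,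
          star (y (a, finProdFinEquiv (i, ε)))
            * (N (a, finProdFinEquiv (i, ε)) (b, finProdFinEquiv (j, δ))
              * y (b, finProdFinEquiv (j, δ))) := by
    rw [quadExpand, sumExpand (fun p => ∑ q, star (y p) * (N p q * y q))]
    refine Finset.sum_congr rfl fun a _ => ?_
    refine Finset.sum_congr rfl fun i _ => ?_
    rw [Finset.sum_comm]
    rw [sumExpand (fun q => ∑ ε : Fin 2,
      star (y (a, finProdFinEquiv (i, ε))) * (N (a, finProdFinEquiv (i, ε)) q * y q))]
  have key : (star x ⬝ᵥ M *ᵥ x).re = star y ⬝ᵥ N *ᵥ y := by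
    rw [hL, hR]
    refine Finset.sum_congr rfl fun a _ => ?_
    refine Finset.sum_congr rfl fun i _ => ?_
    refine Finset.sum_congr rfl fun b _ => ?_
    refine Finset.sum_congr rfl fun j _ => ?_
    conv_rhs => rw [Fin.sum_univ_two]
    conv_rhs => rw [Fin.sum_univ_two, Fin.sum_univ_two]
    simp only [star_trivial]
    rw [hN00, hN01, hN10, hN11, hy0, hy1, hy0 b j, hy1 b j, hMentry]
    simp only [Complex.mul_re, Complex.add_re, Complex.add_im, Complex.mul_im,
      Complex.ofReal_re, Complex.ofReal_im, Complex.I_re, Complex.I_im, RCLike.star_def,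
      Complex.conj_re, Complex.conj_im]
    ring
  rw [hre, key]
  exact Complex.zero_le_real.2 hyr
end
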